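/- arXiv:1710.08265 — 3 statements merged into one kernel-verified Lean document; each statement's English description precedes it below -/
import Mathlib

section
/- A 6-cycle C = (x1,x2,x3,x4,x5,x6) has exactly three inside 6-cycles: (x1,x3,x5,x2,x6,x4), (x1,x3,x6,x4,x2,x5), and (x1,x4,x2,x6,x3,x5) (as undirected cycles, up to rotation and reflection). -/
open Finset

/-- The edge set of the closed walk visiting `f 0, f 1, ..., f (m-1)` and back to `f 0`. -/
def cycleEdges {V : Type*} [DecidableEq V] (m : ℕ) (f : ℕ → V) : Finset (Sym2 V) :=
  (Finset.range m).image (fun i => s(f i, f ((i + 1) % m)))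

/-- `f` describes an `m`-cycle: its first `m` values are pairwise distinct. -/
def IsCycleMap {V : Type*} (m : ℕ) (f : ℕ → V) : Prop :=
  Set.InjOn f ↑(Finset.range m)

/-- Vertex set of the cycle described by `f`. -/
def cycleVerts {V : Type*} [DecidableEq V] (m : ℕ) (f : ℕ → V) : Finset V :=
  (Finset.range m).image f

/-- `g` is an inside `m`-cycle of `f`: same vertex set and edge-disjoint. -/
def IsInsideOf {V : Type*} [DecidableEq V] (m : ℕ) (g f : ℕ → V) : Prop :=
  IsCycleMap m g ∧ cycleVerts m g = cycleVerts m f ∧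
    Disjoint (cycleEdges m f) (cycleEdges m g)

/-- Edge set of the complete graph on `V`. -/
def kEdges (V : Type*) [Fintype V] [DecidableEq V] : Finset (Sym2 V) :=
  Finset.univ.filter (fun e => ¬ e.IsDiag)

/-- Edge set of the complete bipartite graph `K_{r,s}`. -/
def bipEdges (r s : ℕ) : Finset (Sym2 (Fin r ⊕ Fin s)) :=
  (Finset.univ : Finset (Fin r × Fin s)).image (fun p => s(Sum.inl p.1, Sum.inr p.2))

/-- `E` admits an almost 2-perfect 8-cycle decomposition. -/
def HasA2PDecomp {V : Type*} [DecidableEq V] (E : Finset (Sym2 V)) : Prop :=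
  ∃ (k : ℕ) (c c' : Fin k → ℕ → V),
    (∀ i, IsCycleMap 8 (c i)) ∧
    (∀ i j, i ≠ j → Disjoint (cycleEdges 8 (c i)) (cycleEdges 8 (c j))) ∧
    Finset.univ.sup (fun i => cycleEdges 8 (c i)) = E ∧
    (∀ i, IsInsideOf 8 (c' i) (c i)) ∧
    (∀ i j, i ≠ j → Disjoint (cycleEdges 8 (c' i)) (cycleEdges 8 (c' j))) ∧
    Finset.univ.sup (fun i => cycleEdges 8 (c' i)) = E

/-- `E` admits an almost 2-perfect 8-cycle packing with leave `L`. -/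
def HasA2PPacking {V : Type*} [DecidableEq V] (E L : Finset (Sym2 V)) : Prop :=
  L ⊆ E ∧ ∃ (k : ℕ) (c c' : Fin k → ℕ → V),
    (∀ i, IsCycleMap 8 (c i)) ∧
    (∀ i j, i ≠ j → Disjoint (cycleEdges 8 (c i)) (cycleEdges 8 (c j))) ∧
    Finset.univ.sup (fun i => cycleEdges 8 (c i)) = E \ L ∧
    (∀ i, IsInsideOf 8 (c' i) (c i)) ∧
    (∀ i j, i ≠ j → Disjoint (cycleEdges 8 (c' i)) (cycleEdges 8 (c' j))) ∧
    Finset.univ.sup (fun i => cycleEdges 8 (c' i)) = E \ L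

/-- A 1-factor (perfect matching) as a set of edges. -/
def IsOneFactor {V : Type*} (L : Finset (Sym2 V)) : Prop :=
  (∀ e ∈ L, ¬ e.IsDiag) ∧ ∀ v : V, ∃! e, e ∈ L ∧ v ∈ e

/-!
Via `f`, the vertices of the 6-cycle are a copy of `Fin 6`, and `Sym2.map f` carries the inside
cycles of the standard hexagon `i ↦ i mod 6` bijectively onto those of `f`. The non-edges of the
hexagon form a triangular prism (triangles `{0, 2, 4}`, `{1, 3, 5}`, rungs `{i, i + 3}`). An
inside cycle is a Hamiltonian cycle of this cubic graph, so its complement there is a perfect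
matching, and of the prism's four perfect matchings exactly the three containing a single rung
leave a Hamiltonian cycle. The proof checks this finite fact by a search over walks in the prism.
-/

open Function

section Transport

variable {V W : Type*} [DecidableEq V] {m : ℕ}

def insideEdgeSets (m : ℕ) (f : ℕ → V) : Set (Finset (Sym2 V)) :=
  {E | ∃ g : ℕ → V, IsInsideOf m g f ∧ cycleEdges m g = E}

lemma cycleEdges_congr {f f' : ℕ → V} (h : Set.EqOn f f' (range m)) :
    cycleEdges m f = cycleEdges m f' :=
  image_congr fun i hi => by
    have hi : i < m := mem_range.1 hi
    simp only [h (mem_range.2 hi), h (mem_range.2 (Nat.mod_lt (i + 1) (by omega)))]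

lemma isInsideOf_congr {g g' f f' : ℕ → V} (hg : Set.EqOn g g' (range m))
    (hf : Set.EqOn f f' (range m)) : IsInsideOf m g f ↔ IsInsideOf m g' f' := by
  simp only [IsInsideOf, IsCycleMap, cycleVerts, hg.injOn_iff, image_congr hg, image_congr hf,
    cycleEdges_congr hg, cycleEdges_congr hf]

lemma insideEdgeSets_congr {f f' : ℕ → V} (h : Set.EqOn f f' (range m)) :
    insideEdgeSets m f = insideEdgeSets m f' := by
  simp only [insideEdgeSets, isInsideOf_congr (Set.eqOn_refl _ _) h]

lemma isCycleMap_iff_card_cycleVerts {f : ℕ → V} : IsCycleMap m f ↔ #(cycleVerts m f) = m := by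
  rw [IsCycleMap, cycleVerts, ← card_image_iff, card_range]

lemma exists_eqOn_comp_of_isInsideOf {φ : W → V} {g : ℕ → V} {f : ℕ → W}
    (h : IsInsideOf m g (φ ∘ f)) : ∃ e : ℕ → W, Set.EqOn g (φ ∘ e) (range m) := by
  have : ∀ i, ∃ w, i < m → g i = φ w := by
    intro i
    by_cases hi : i < m
    · have hgi : g i ∈ cycleVerts m (φ ∘ f) := h.2.1 ▸ mem_image_of_mem g (mem_range.2 hi)
      obtain ⟨j, -, hj⟩ := mem_image.1 hgi
      exact ⟨f j, fun _ => hj.symm⟩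
    · exact ⟨f 0, fun h => absurd h hi⟩
  choose e he using this
  exact ⟨e, fun i hi => he i (mem_range.1 hi)⟩

variable [DecidableEq W]

lemma cycleEdges_comp (φ : W → V) (f : ℕ → W) :
    cycleEdges m (φ ∘ f) = (cycleEdges m f).image (Sym2.map φ) := by
  simp only [cycleEdges, image_image]
  rfl

lemma isInsideOf_comp_iff {φ : W → V} (hφ : Injective φ) {g f : ℕ → W} :
    IsInsideOf m (φ ∘ g) (φ ∘ f) ↔ IsInsideOf m g f := by
  simp only [IsInsideOf, IsCycleMap, cycleVerts, cycleEdges_comp, ← image_image,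
    (image_injective hφ).eq_iff, disjoint_image (Sym2.map.injective hφ)]
  exact and_congr_left' ⟨Set.InjOn.of_comp, hφ.comp_injOn⟩

lemma insideEdgeSets_comp {φ : W → V} (hφ : Injective φ) (f : ℕ → W) :
    insideEdgeSets m (φ ∘ f) = image (Sym2.map φ) '' insideEdgeSets m f := by
  ext E
  constructor
  · rintro ⟨g, hg, rfl⟩
    obtain ⟨e, he⟩ := exists_eqOn_comp_of_isInsideOf hg
    refine ⟨cycleEdges m e, ⟨e, ?_, rfl⟩, ?_⟩
    · exact (isInsideOf_comp_iff hφ).1 ((isInsideOf_congr he (Set.eqOn_refl _ _)).1 hg)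
    · rw [← cycleEdges_comp, cycleEdges_congr he]
  · rintro ⟨_, ⟨g, hg, rfl⟩, rfl⟩
    exact ⟨φ ∘ g, (isInsideOf_comp_iff hφ).2 hg, cycleEdges_comp φ g⟩

end Transport

section Hexagon

def hexagon : ℕ → Fin 6 := Fin.ofNat 6

-- Nested implications let `decide` abandon a partial walk as soon as it breaks a condition.
set_option synthInstance.maxSize 1024 in
theorem cycleEdges_eq_of_avoids_hexagon :
    ∀ a b : Fin 6, a ≠ b → s(a, b) ∉ cycleEdges 6 hexagon →
    ∀ c : Fin 6, c ≠ a → c ≠ b → s(b, c) ∉ cycleEdges 6 hexagon →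
    ∀ d : Fin 6, d ≠ a → d ≠ b → d ≠ c → s(c, d) ∉ cycleEdges 6 hexagon →
    ∀ e : Fin 6, e ≠ a → e ≠ b → e ≠ c → e ≠ d → s(d, e) ∉ cycleEdges 6 hexagon →
    ∀ f : Fin 6, f ≠ a → f ≠ b → f ≠ c → f ≠ d → f ≠ e → s(e, f) ∉ cycleEdges 6 hexagon →
    s(f, a) ∉ cycleEdges 6 hexagon →
    cycleEdges 6 (fun i => [a, b, c, d, e, f].getD i 0) =
        cycleEdges 6 (fun i => hexagon (([0,2,4,1,5,3] : List ℕ).getD i 0)) ∨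
    cycleEdges 6 (fun i => [a, b, c, d, e, f].getD i 0) =
        cycleEdges 6 (fun i => hexagon (([0,2,5,3,1,4] : List ℕ).getD i 0)) ∨
    cycleEdges 6 (fun i => [a, b, c, d, e, f].getD i 0) =
        cycleEdges 6 (fun i => hexagon (([0,3,1,5,2,4] : List ℕ).getD i 0)) := by
  decide

theorem insideEdgeSets_hexagon :
    insideEdgeSets 6 hexagon =
      {cycleEdges 6 (fun i => hexagon (([0,2,4,1,5,3] : List ℕ).getD i 0)),
       cycleEdges 6 (fun i => hexagon (([0,2,5,3,1,4] : List ℕ).getD i 0)),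
       cycleEdges 6 (fun i => hexagon (([0,3,1,5,2,4] : List ℕ).getD i 0))} := by
  ext E
  constructor
  · rintro ⟨g, hg, rfl⟩
    have havoid : ∀ i < 6, s(g i, g ((i + 1) % 6)) ∉ cycleEdges 6 hexagon := fun i hi hmem =>
      disjoint_left.1 hg.2.2 hmem (mem_image_of_mem _ (mem_range.2 hi))
    have htuple : Set.EqOn g (fun i => [g 0, g 1, g 2, g 3, g 4, g 5].getD i 0) (range 6) := by
      intro i hi
      simp only [coe_range, Set.mem_Iio] at hi
      interval_cases i <;> rfl
    rw [cycleEdges_congr htuple]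
    apply cycleEdges_eq_of_avoids_hexagon <;>
      first
      | exact hg.1.ne (by simp) (by simp) (by decide)
      | exact havoid _ (by norm_num)
  · rintro (rfl | rfl | rfl) <;>
      exact ⟨_, ⟨isCycleMap_iff_card_cycleVerts.2 (by decide), by decide, by decide⟩, rfl⟩

theorem ncard_insideEdgeSets_hexagon : (insideEdgeSets 6 hexagon).ncard = 3 := by
  rw [insideEdgeSets_hexagon]
  exact Set.ncard_eq_three.2 ⟨_, _, _, by decide, by decide, by decide, rfl⟩

end Hexagon

/-- A 6-cycle has exactly three inside 6-cycles, the listed ones. -/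
theorem six_cycle_three_insides {V : Type*} [DecidableEq V] (f : ℕ → V)
    (hf : IsCycleMap 6 f) :
    {E : Finset (Sym2 V) | ∃ g : ℕ → V, IsInsideOf 6 g f ∧ cycleEdges 6 g = E}
        = {cycleEdges 6 (fun i => f (([0,2,4,1,5,3] : List ℕ).getD i 0)),
           cycleEdges 6 (fun i => f (([0,2,5,3,1,4] : List ℕ).getD i 0)),
           cycleEdges 6 (fun i => f (([0,3,1,5,2,4] : List ℕ).getD i 0))} ∧
    {E : Finset (Sym2 V) | ∃ g : ℕ → V, IsInsideOf 6 g f ∧ cycleEdges 6 g = E}.ncard = 3 := by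
  set φ : Fin 6 → V := f ∘ Fin.val
  have hφ : Injective φ := fun a b h => Fin.ext (hf (by simp) (by simp) h)
  have hf_eq : Set.EqOn f (φ ∘ hexagon) (range 6) := fun i hi =>
    congrArg f (Nat.mod_eq_of_lt (mem_range.1 hi)).symm
  have hreduce : insideEdgeSets 6 f = image (Sym2.map φ) '' insideEdgeSets 6 hexagon := by
    rw [insideEdgeSets_congr hf_eq, insideEdgeSets_comp hφ]
  have hpattern : ∀ l : List ℕ, (∀ i < 6, l.getD i 0 < 6) →
      (cycleEdges 6 (fun i => hexagon (l.getD i 0))).image (Sym2.map φ) =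
        cycleEdges 6 (fun i => f (l.getD i 0)) := fun l hl => by
    rw [← cycleEdges_comp]
    exact cycleEdges_congr fun i hi => congrArg f (Nat.mod_eq_of_lt (hl i (mem_range.1 hi)))
  refine ⟨?_, ?_⟩
  · change insideEdgeSets 6 f = _
    rw [hreduce, insideEdgeSets_hexagon, Set.image_insert_eq, Set.image_insert_eq,
      Set.image_singleton, hpattern _ (by decide), hpattern _ (by decide), hpattern _ (by decide)]
  · change (insideEdgeSets 6 f).ncard = 3
    rw [hreduce, Set.ncard_image_of_injective _ (image_injective (Sym2.map.injective hφ)),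
      ncard_insideEdgeSets_hexagon]
end

section
/- The complete bipartite graph K_{4,4} admits an almost 2-perfect 8-cycle decomposition: with parts {x0,x1,x2,x3} and {y0,y1,y2,y3}, the cycles (x0,y0,x1,y1,x2,y2,x3,y3) and (x0,y2,x1,y3,x2,y0,x3,y1) partition the edges of K_{4,4}, and the cycles (x1,y2,x0,y1,x3,y0,x2,y3) and (x1,y1,x2,y2,x3,y3,x0,y0) also partition the edges of K_{4,4}, with each cycle of the second decomposition being an inside cycle of the corresponding cycle of the first (same vertex set and edge-disjoint from it). -/
open Finset

/-!
Each of the two cycles is Hamiltonian in `K_{4,4}` (8 vertices, 8 edges) and together they cover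
its 16 edges, so they are edge-disjoint and each is the complement of the other. The second
decomposition consists of the same two edge sets with the roles swapped, so the cycle paired with
`C` has the edges of the other cycle: disjoint from `C`, and on the same (full) vertex set.
-/

lemma isCycleMap_list_getD {V : Type*} {m : ℕ} {l : List V} (d : V) (hl : l.Nodup)
    (hm : l.length = m) : IsCycleMap m (fun j => l.getD j d) := by
  intro a ha b hb hab
  simp only [coe_range, Set.mem_Iio] at ha hb
  simp only [List.getD_eq_getElem _ _ (hm ▸ ha), List.getD_eq_getElem _ _ (hm ▸ hb)] at hab
  simpa using (hl.getElem_inj_iff).1 hab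

lemma card_cycleEdges_le {V : Type*} [DecidableEq V] (m : ℕ) (f : ℕ → V) :
    #(cycleEdges m f) ≤ m :=
  (card_image_le).trans (card_range m).le

lemma card_bipEdges (r s : ℕ) : #(bipEdges r s) = r * s := by
  rw [bipEdges, card_image_of_injective, card_univ, Fintype.card_prod, Fintype.card_fin,
    Fintype.card_fin]
  rintro ⟨a, b⟩ ⟨a', b'⟩ h
  simpa using h

lemma IsCycleMap.cycleVerts_eq_univ {V : Type*} [Fintype V] [DecidableEq V] {m : ℕ}
    {f : ℕ → V} (hf : IsCycleMap m f) (hV : Fintype.card V = m) : cycleVerts m f = univ :=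
  eq_univ_of_card _ (by rw [cycleVerts, card_image_of_injOn hf, card_range, hV])

lemma disjoint_cycleEdges_of_union_eq {V : Type*} [DecidableEq V] {m : ℕ} {f g : ℕ → V}
    {E : Finset (Sym2 V)} (hE : #E = 2 * m) (hfg : cycleEdges m f ∪ cycleEdges m g = E) :
    Disjoint (cycleEdges m f) (cycleEdges m g) := by
  refine card_union_eq_card_add_card.1 (le_antisymm (card_union_le _ _) ?_)
  rw [hfg, hE]
  linarith [card_cycleEdges_le m f, card_cycleEdges_le m g]

theorem hamiltonian_pair_swap {V : Type*} [Fintype V] [DecidableEq V] {m : ℕ}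
    {E : Finset (Sym2 V)} {c₁ c₂ d₁ d₂ : ℕ → V} (hV : Fintype.card V = m) (hE : #E = 2 * m)
    (hc₁ : IsCycleMap m c₁) (hc₂ : IsCycleMap m c₂) (hd₁ : IsCycleMap m d₁)
    (hd₂ : IsCycleMap m d₂) (hcover : cycleEdges m c₁ ∪ cycleEdges m c₂ = E)
    (hd₁c₂ : cycleEdges m d₁ = cycleEdges m c₂) (hd₂c₁ : cycleEdges m d₂ = cycleEdges m c₁) :
    IsCycleMap m c₁ ∧ IsCycleMap m c₂ ∧ Disjoint (cycleEdges m c₁) (cycleEdges m c₂) ∧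
      cycleEdges m c₁ ∪ cycleEdges m c₂ = E ∧ IsInsideOf m d₁ c₁ ∧ IsInsideOf m d₂ c₂ ∧
      Disjoint (cycleEdges m d₁) (cycleEdges m d₂) ∧ cycleEdges m d₁ ∪ cycleEdges m d₂ = E := by
  have hdisj := disjoint_cycleEdges_of_union_eq hE hcover
  have hverts {f g : ℕ → V} (hf : IsCycleMap m f) (hg : IsCycleMap m g) :
      cycleVerts m f = cycleVerts m g := by
    rw [hf.cycleVerts_eq_univ hV, hg.cycleVerts_eq_univ hV]
  refine ⟨hc₁, hc₂, hdisj, hcover, ⟨hd₁, hverts hd₁ hc₁, hd₁c₂ ▸ hdisj⟩,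
    ⟨hd₂, hverts hd₂ hc₂, hd₂c₁ ▸ hdisj.symm⟩, ?_, ?_⟩
  · rw [hd₁c₂, hd₂c₁]
    exact hdisj.symm
  · rw [hd₁c₂, hd₂c₁, union_comm, hcover]

/-- The explicit almost 2-perfect 8-cycle decomposition of `K_{4,4}`. -/
theorem a2p_K44 :
    IsCycleMap 8 (fun j => (([Sum.inl 0, Sum.inr 0, Sum.inl 1, Sum.inr 1, Sum.inl 2, Sum.inr 2, Sum.inl 3, Sum.inr 3] : List (Fin 4 ⊕ Fin 4)).getD j (Sum.inl 0))) ∧ IsCycleMap 8 (fun j => (([Sum.inl 0, Sum.inr 2, Sum.inl 1, Sum.inr 3, Sum.inl 2, Sum.inr 0, Sum.inl 3, Sum.inr 1] : List (Fin 4 ⊕ Fin 4)).getD j (Sum.inl 0))) ∧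
    Disjoint (cycleEdges 8 (fun j => (([Sum.inl 0, Sum.inr 0, Sum.inl 1, Sum.inr 1, Sum.inl 2, Sum.inr 2, Sum.inl 3, Sum.inr 3] : List (Fin 4 ⊕ Fin 4)).getD j (Sum.inl 0)))) (cycleEdges 8 (fun j => (([Sum.inl 0, Sum.inr 2, Sum.inl 1, Sum.inr 3, Sum.inl 2, Sum.inr 0, Sum.inl 3, Sum.inr 1] : List (Fin 4 ⊕ Fin 4)).getD j (Sum.inl 0)))) ∧
    cycleEdges 8 (fun j => (([Sum.inl 0, Sum.inr 0, Sum.inl 1, Sum.inr 1, Sum.inl 2, Sum.inr 2, Sum.inl 3, Sum.inr 3] : List (Fin 4 ⊕ Fin 4)).getD j (Sum.inl 0))) ∪ cycleEdges 8 (fun j => (([Sum.inl 0, Sum.inr 2, Sum.inl 1, Sum.inr 3, Sum.inl 2, Sum.inr 0, Sum.inl 3, Sum.inr 1] : List (Fin 4 ⊕ Fin 4)).getD j (Sum.inl 0))) = bipEdges 4 4 ∧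
    IsInsideOf 8 (fun j => (([Sum.inl 1, Sum.inr 2, Sum.inl 0, Sum.inr 1, Sum.inl 3, Sum.inr 0, Sum.inl 2, Sum.inr 3] : List (Fin 4 ⊕ Fin 4)).getD j (Sum.inl 0))) (fun j => (([Sum.inl 0, Sum.inr 0, Sum.inl 1, Sum.inr 1, Sum.inl 2, Sum.inr 2, Sum.inl 3, Sum.inr 3] : List (Fin 4 ⊕ Fin 4)).getD j (Sum.inl 0))) ∧ IsInsideOf 8 (fun j => (([Sum.inl 1, Sum.inr 1, Sum.inl 2, Sum.inr 2, Sum.inl 3, Sum.inr 3, Sum.inl 0, Sum.inr 0] : List (Fin 4 ⊕ Fin 4)).getD j (Sum.inl 0))) (fun j => (([Sum.inl 0, Sum.inr 2, Sum.inl 1, Sum.inr 3, Sum.inl 2, Sum.inr 0, Sum.inl 3, Sum.inr 1] : List (Fin 4 ⊕ Fin 4)).getD j (Sum.inl 0))) ∧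
    Disjoint (cycleEdges 8 (fun j => (([Sum.inl 1, Sum.inr 2, Sum.inl 0, Sum.inr 1, Sum.inl 3, Sum.inr 0, Sum.inl 2, Sum.inr 3] : List (Fin 4 ⊕ Fin 4)).getD j (Sum.inl 0)))) (cycleEdges 8 (fun j => (([Sum.inl 1, Sum.inr 1, Sum.inl 2, Sum.inr 2, Sum.inl 3, Sum.inr 3, Sum.inl 0, Sum.inr 0] : List (Fin 4 ⊕ Fin 4)).getD j (Sum.inl 0)))) ∧
    cycleEdges 8 (fun j => (([Sum.inl 1, Sum.inr 2, Sum.inl 0, Sum.inr 1, Sum.inl 3, Sum.inr 0, Sum.inl 2, Sum.inr 3] : List (Fin 4 ⊕ Fin 4)).getD j (Sum.inl 0))) ∪ cycleEdges 8 (fun j => (([Sum.inl 1, Sum.inr 1, Sum.inl 2, Sum.inr 2, Sum.inl 3, Sum.inr 3, Sum.inl 0, Sum.inr 0] : List (Fin 4 ⊕ Fin 4)).getD j (Sum.inl 0))) = bipEdges 4 4 := by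
  refine hamiltonian_pair_swap (by decide) (card_bipEdges 4 4) ?_ ?_ ?_ ?_
    (by decide) (by decide) (by decide)
  all_goals exact isCycleMap_list_getD _ (by decide) rfl
end

section
/- If there exist an almost 2-perfect maximum 8-cycle packing of K_r with leave L_r and an almost 2-perfect 8-cycle decomposition of K_{r,s}, then there exists an almost 2-perfect 8-cycle packing of the graph K_{r+s} \ K_s (complete graph on r+s vertices minus the edges inside a fixed s-subset) with leave L_r. -/
open Finset

/-!
The edges of `K_{r+s} \ K_s` split into the edges of `K_r` on the first `r` vertices and those
of `K_{r,s}` between the two parts. Concatenating the cycles of the packing of `K_r` with those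
of the decomposition of `K_{r,s}`, and likewise their inside cycles, gives the required packing:
the two families live on disjoint edge sets, so edge-disjointness within each family carries over
to the union, and the leave is untouched.
-/

theorem Finset.subset_of_sup_univ_eq {ι α : Type*} [Fintype ι] [DecidableEq α]
    {F : ι → Finset α} {E : Finset α} (h : univ.sup F = E) (i : ι) : F i ⊆ E :=
  h ▸ le_sup (mem_univ i)

section FinAppend

variable {α β : Type*} {m n : ℕ}

theorem Finset.sup_univ_fin_append [DecidableEq β] (f : α → Finset β) (a : Fin m → α)
    (b : Fin n → α) :
    univ.sup (fun i => f (Fin.append a b i)) = univ.sup (f ∘ a) ∪ univ.sup (f ∘ b) := by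
  ext x
  simp only [mem_union, mem_sup, mem_univ, true_and, Function.comp_apply]
  constructor
  · rintro ⟨i, hi⟩
    induction i using Fin.addCases with
    | left i => exact .inl ⟨i, by simpa using hi⟩
    | right i => exact .inr ⟨i, by simpa using hi⟩
  · rintro (⟨i, hi⟩ | ⟨i, hi⟩)
    exacts [⟨Fin.castAdd n i, by simpa⟩, ⟨Fin.natAdd m i, by simpa⟩]

theorem pairwise_disjoint_fin_append (f : α → Finset β) {a : Fin m → α} {b : Fin n → α}
    (ha : ∀ i j, i ≠ j → Disjoint (f (a i)) (f (a j)))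
    (hb : ∀ i j, i ≠ j → Disjoint (f (b i)) (f (b j)))
    (hab : ∀ i j, Disjoint (f (a i)) (f (b j))) :
    ∀ i j, i ≠ j → Disjoint (f (Fin.append a b i)) (f (Fin.append a b j)) := by
  simp only [Fin.forall_fin_add, Fin.append_left, Fin.append_right, ne_eq,
    Fin.castAdd_inj, Fin.natAdd_inj]
  exact ⟨fun i => ⟨ha i, fun j _ => hab i j⟩, fun i => ⟨fun j _ => (hab j i).symm, hb i⟩⟩

end FinAppend

section A2P

variable {V : Type*} [DecidableEq V]

theorem hasA2PPacking_iff {E L : Finset (Sym2 V)} :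
    HasA2PPacking E L ↔ L ⊆ E ∧ HasA2PDecomp (E \ L) := Iff.rfl

theorem HasA2PDecomp.union {E F : Finset (Sym2 V)} (hEF : Disjoint E F)
    (hE : HasA2PDecomp E) (hF : HasA2PDecomp F) : HasA2PDecomp (E ∪ F) := by
  obtain ⟨k, c, c', hcyc, hdisj, hsup, hin, hdisj', hsup'⟩ := hE
  obtain ⟨l, d, d', hcycd, hdisjd, hsupd, hind, hdisjd', hsupd'⟩ := hF
  refine ⟨k + l, Fin.append c d, Fin.append c' d', ?_, ?_, ?_, ?_, ?_, ?_⟩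
  · simpa [Fin.forall_fin_add] using ⟨hcyc, hcycd⟩
  · exact pairwise_disjoint_fin_append _ hdisj hdisjd fun i j =>
      hEF.mono (subset_of_sup_univ_eq hsup i) (subset_of_sup_univ_eq hsupd j)
  · rw [Finset.sup_univ_fin_append, ← hsup, ← hsupd]; rfl
  · simpa [Fin.forall_fin_add] using ⟨hin, hind⟩
  · exact pairwise_disjoint_fin_append _ hdisj' hdisjd' fun i j =>
      hEF.mono (subset_of_sup_univ_eq hsup' i) (subset_of_sup_univ_eq hsupd' j)
  · rw [Finset.sup_univ_fin_append, ← hsup', ← hsupd']; rfl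

theorem HasA2PPacking.union_hasA2PDecomp {E F L : Finset (Sym2 V)} (hEF : Disjoint E F)
    (hE : HasA2PPacking E L) (hF : HasA2PDecomp F) : HasA2PPacking (E ∪ F) L := by
  obtain ⟨hLE, hEL⟩ := hasA2PPacking_iff.mp hE
  refine hasA2PPacking_iff.mpr ⟨hLE.trans subset_union_left, ?_⟩
  rw [union_sdiff_distrib, sdiff_eq_self_of_disjoint (hEF.symm.mono_right hLE)]
  exact hEL.union (hEF.mono_left sdiff_subset) hF

end A2P

section Edges

variable {V : Type*} [Fintype V] [DecidableEq V]

theorem kEdges_sdiff_sym2_compl (A : Finset V) :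
    kEdges V \ Aᶜ.sym2 =
      A.sym2.filter (fun e => ¬ e.IsDiag) ∪ (A ×ˢ Aᶜ).image (fun p => s(p.1, p.2)) := by
  ext e
  induction e using Sym2.ind with
  | _ x y =>
    have hxy : s(x, y) ∈ (A ×ˢ Aᶜ).image (fun p => s(p.1, p.2)) ↔
        x ∈ A ∧ y ∉ A ∨ y ∈ A ∧ x ∉ A := by
      simp only [mem_image, mem_product, mem_compl, Prod.exists, Sym2.eq_iff]
      grind
    rw [mem_union, hxy]
    simp only [kEdges, mem_sdiff, mem_filter, mem_univ, true_and, Sym2.mk_isDiag_iff,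
      mk_mem_sym2_iff, mem_compl]
    grind

theorem disjoint_sym2_image_product_compl (A : Finset V) :
    Disjoint A.sym2 ((A ×ˢ Aᶜ).image (fun p => s(p.1, p.2))) := by
  simp only [disjoint_left, mem_image, mem_product, mem_compl, not_exists, not_and, and_imp,
    Prod.forall]
  intro e he x y _ hy hxy
  exact hy (mk_mem_sym2_iff.mp (hxy ▸ he)).2

end Edges

theorem a2p_biparhole_general (r s : ℕ) (Lr : Finset (Sym2 (Fin (r + s))))
    (h1 : HasA2PPacking ((Finset.univ.filter (fun v : Fin (r + s) => v.val < r)).sym2.filter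
      (fun e => ¬ e.IsDiag)) Lr)
    (h2 : HasA2PDecomp (((Finset.univ.filter (fun v : Fin (r + s) => v.val < r)) ×ˢ
      (Finset.univ.filter (fun v : Fin (r + s) => r ≤ v.val))).image
        (fun p => s(p.1, p.2)))) :
    HasA2PPacking ((kEdges (Fin (r + s))) \
      ((Finset.univ.filter (fun v : Fin (r + s) => r ≤ v.val)).sym2)) Lr := by
  set A := Finset.univ.filter (fun v : Fin (r + s) => v.val < r)
  have hAc : Finset.univ.filter (fun v : Fin (r + s) => r ≤ v.val) = Aᶜ := by
    simp [A, Finset.compl_filter]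
  rw [hAc] at h2 ⊢
  rw [kEdges_sdiff_sym2_compl]
  exact h1.union_hasA2PDecomp
    ((disjoint_sym2_image_product_compl A).mono_left (filter_subset _ _)) h2

/-- From an A2P maximum packing of `K_r` with leave `Lr` and an A2P decomposition of
`K_{r,s}`, one gets an A2P packing of `K_{r+s} \ K_s` with leave `Lr`. -/
theorem a2p_biparhole (r s : ℕ) (Lr : Finset (Sym2 (Fin (r + s))))
    (hLr : Lr ⊆ ((Finset.univ.filter (fun v : Fin (r + s) => v.val < r)).sym2.filter
      (fun e => ¬ e.IsDiag)))
    (h1 : HasA2PPacking ((Finset.univ.filter (fun v : Fin (r + s) => v.val < r)).sym2.filter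
      (fun e => ¬ e.IsDiag)) Lr)
    (h2 : HasA2PDecomp (((Finset.univ.filter (fun v : Fin (r + s) => v.val < r)) ×ˢ
      (Finset.univ.filter (fun v : Fin (r + s) => r ≤ v.val))).image
        (fun p => s(p.1, p.2)))) :
    HasA2PPacking ((kEdges (Fin (r + s))) \
      ((Finset.univ.filter (fun v : Fin (r + s) => r ≤ v.val)).sym2)) Lr :=
  a2p_biparhole_general r s Lr h1 h2
end
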